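/- arXiv:math/0203071 — 2 statements merged into one kernel-verified Lean document; each statement's English description precedes it below -/
import Mathlib

section
/- Let Z be a fat point scheme in P¹×P¹ with Hilbert function H_Z. If H_Z(i,j) = H_Z(i+1,j) for some (i,j), then H_Z(i+1,j) = H_Z(i+2,j). Symmetrically, if H_Z(i,j) = H_Z(i,j+1), then H_Z(i,j+1) = H_Z(i,j+2). -/
open MvPolynomial

noncomputable section

/-- The `(i,j)`-bihomogeneous component of `k[x₀,x₁,y₀,y₁]`, where
`x₀ = X 0, x₁ = X 1` have degree `(1,0)` and `y₀ = X 2, y₁ = X 3` have degree `(0,1)`. -/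
def biComp (k : Type*) [Field k] (i j : ℕ) : Submodule k (MvPolynomial (Fin 4) k) :=
  Submodule.span k {p | ∃ d : Fin 4 →₀ ℕ,
    d 0 + d 1 = i ∧ d 2 + d 3 = j ∧ p = MvPolynomial.monomial d 1}

/-- The bigraded Hilbert function of `R/I` at `(i,j)`:
the dimension of the image of the `(i,j)` component in `R/I`. -/
def hilb (k : Type*) [Field k] (I : Ideal (MvPolynomial (Fin 4) k)) (i j : ℕ) : ℕ :=
  Module.finrank k ((biComp k i j).map (Ideal.Quotient.mkₐ k I).toLinearMap)

/-- The bihomogeneous ideal of the point `[p.1 : p.2] × [q.1 : q.2]` of `ℙ¹ × ℙ¹`. -/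
def pointIdeal (k : Type*) [Field k] (p q : k × k) : Ideal (MvPolynomial (Fin 4) k) :=
  Ideal.span {C p.2 * X 0 - C p.1 * X 1, C q.2 * X 2 - C q.1 * X 3}

/-! ### Auxiliary lemmas -/

section Aux

variable {k : Type*} [Field k]

/-- Polynomials in `(X 0, X 2)^m` have all monomials of weight `≥ m`, where the weight of a
monomial `d` is `d 0 + d 2`. -/
lemma mem_pow_imp (m : ℕ) (f : MvPolynomial (Fin 4) k)
    (hf : f ∈ (Ideal.span {X 0, X 2} : Ideal (MvPolynomial (Fin 4) k)) ^ m) :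
    ∀ d ∈ f.support, m ≤ d 0 + d 2 := by
  induction m generalizing f with
  | zero => intro d _; omega
  | succ n ih =>
    rw [pow_succ] at hf
    refine Submodule.mul_induction_on hf ?_ ?_
    · intro a ha b hb
      intro d hd
      classical
      have hsub := MvPolynomial.support_mul a b hd
      rw [Finset.mem_add] at hsub
      obtain ⟨u, hu, v, hv, rfl⟩ := hsub
      have h1 : n ≤ u 0 + u 2 := ih a ha u hu
      have h2 : 1 ≤ v 0 + v 2 := by
        rw [Ideal.mem_span_pair] at hb
        obtain ⟨a', b', rfl⟩ := hb
        have hv' := Finset.mem_union.mp (MvPolynomial.support_add hv)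
        rcases hv' with hv' | hv'
        · have := MvPolynomial.support_mul a' (X 0) hv'
          rw [Finset.mem_add] at this
          obtain ⟨u', _, v', hv'', rfl⟩ := this
          rw [MvPolynomial.support_X] at hv''
          simp only [Finset.mem_singleton] at hv''
          subst hv''
          simp [Finsupp.single_apply]; omega
        · have := MvPolynomial.support_mul b' (X 2) hv'
          rw [Finset.mem_add] at this
          obtain ⟨u', _, v', hv'', rfl⟩ := this
          rw [MvPolynomial.support_X] at hv''
          simp only [Finset.mem_singleton] at hv''
          subst hv''
          simp [Finsupp.single_apply]; omega
      simp only [Finsupp.add_apply]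
      omega
    · intro x y ihx ihy
      intro d hd
      have := MvPolynomial.support_add hd
      rcases Finset.mem_union.mp this with h | h
      · exact ihx d h
      · exact ihy d h

/-- Conversely, a polynomial all of whose monomials have weight `≥ m` lies in `(X 0, X 2)^m`. -/
lemma imp_mem_pow (m : ℕ) (f : MvPolynomial (Fin 4) k)
    (hf : ∀ d ∈ f.support, m ≤ d 0 + d 2) :
    f ∈ (Ideal.span {X 0, X 2} : Ideal (MvPolynomial (Fin 4) k)) ^ m := by
  nth_rewrite 1 [MvPolynomial.as_sum f]
  apply Ideal.sum_mem
  intro d hd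
  have hw := hf d hd
  have key : (X 0 ^ (d 0) * X 2 ^ (d 2) : MvPolynomial (Fin 4) k) ∈
      (Ideal.span {X 0, X 2} : Ideal (MvPolynomial (Fin 4) k)) ^ (d 0 + d 2) := by
    rw [pow_add]
    exact Ideal.mul_mem_mul (Ideal.pow_mem_pow (Ideal.subset_span (by simp)) _)
      (Ideal.pow_mem_pow (Ideal.subset_span (by simp)) _)
  have key2 : (X 0 ^ (d 0) * X 2 ^ (d 2) : MvPolynomial (Fin 4) k) ∈
      (Ideal.span {X 0, X 2} : Ideal (MvPolynomial (Fin 4) k)) ^ m :=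
    Ideal.pow_le_pow_right hw key
  have heq : (monomial d) (coeff d f) =
      (monomial (d - Finsupp.single 0 (d 0) - Finsupp.single 2 (d 2))) (coeff d f) *
        (X 0 ^ (d 0) * X 2 ^ (d 2)) := by
    have hd' : ((d - Finsupp.single 0 (d 0)) - Finsupp.single 2 (d 2)) +
        (Finsupp.single 0 (d 0) + Finsupp.single 2 (d 2)) = d := by
      ext x; fin_cases x <;> simp [Finsupp.single_apply]
    rw [X_pow_eq_monomial, X_pow_eq_monomial, monomial_mul, monomial_mul, mul_one, mul_one, hd']
  rw [heq]
  exact Ideal.mul_mem_left _ _ key2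

/-- `X c` is a non-zerodivisor modulo `(X 0, X 2)^m` for `c ∉ {0, 2}`. -/
lemma X_mul_mem_pow {c : Fin 4} (hc0 : c ≠ 0) (hc2 : c ≠ 2) (m : ℕ)
    (g : MvPolynomial (Fin 4) k)
    (h : X c * g ∈ (Ideal.span {X 0, X 2} : Ideal (MvPolynomial (Fin 4) k)) ^ m) :
    g ∈ (Ideal.span {X 0, X 2} : Ideal (MvPolynomial (Fin 4) k)) ^ m := by
  apply imp_mem_pow
  intro d hd
  have hmem : (Finsupp.single c 1 + d) ∈ (X c * g).support := by
    rw [MvPolynomial.support_X_mul]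
    exact Finset.mem_map_of_mem _ hd
  have := mem_pow_imp m _ h _ hmem
  simpa [Finsupp.single_apply, hc0, hc2] using this

/-- The linear change of coordinates sending `X0, X1, X2, X3` to
`p₂X0 - p₁X1, X0 + tX1, q₂X2 - q₁X3, X2 + sX3`. -/
def fwd (p q : k × k) (t s : k) :
    MvPolynomial (Fin 4) k →ₐ[k] MvPolynomial (Fin 4) k :=
  aeval ![C p.2 * X 0 - C p.1 * X 1, X 0 + C t * X 1,
          C q.2 * X 2 - C q.1 * X 3, X 2 + C s * X 3]

/-- The inverse linear change of coordinates (assuming the determinants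
`p.1 + t p.2` and `q.1 + s q.2` are nonzero). -/
def bwd (p q : k × k) (t s : k) :
    MvPolynomial (Fin 4) k →ₐ[k] MvPolynomial (Fin 4) k :=
  aeval ![C ((p.1 + t * p.2)⁻¹) * (C t * X 0 + C p.1 * X 1),
          C ((p.1 + t * p.2)⁻¹) * (- X 0 + C p.2 * X 1),
          C ((q.1 + s * q.2)⁻¹) * (C s * X 2 + C q.1 * X 3),
          C ((q.1 + s * q.2)⁻¹) * (- X 2 + C q.2 * X 3)]

lemma fwd_bwd (p q : k × k) (t s : k) (hD : p.1 + t * p.2 ≠ 0) (hE : q.1 + s * q.2 ≠ 0) :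
    (fwd p q t s).comp (bwd p q t s) = AlgHom.id k (MvPolynomial (Fin 4) k) := by
  have hD' : (C ((p.1 + t * p.2)⁻¹) * (C p.1 + C t * C p.2) : MvPolynomial (Fin 4) k) = 1 := by
    rw [← C_mul, ← C_add, ← C_mul, inv_mul_cancel₀ hD, C_1]
  have hE' : (C ((q.1 + s * q.2)⁻¹) * (C q.1 + C s * C q.2) : MvPolynomial (Fin 4) k) = 1 := by
    rw [← C_mul, ← C_add, ← C_mul, inv_mul_cancel₀ hE, C_1]
  apply MvPolynomial.algHom_ext
  intro i
  fin_cases i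
  · simp [fwd, bwd, algebraMap_eq]
    linear_combination (X 0 : MvPolynomial (Fin 4) k) * hD'
  · simp [fwd, bwd, algebraMap_eq]
    linear_combination (X 1 : MvPolynomial (Fin 4) k) * hD'
  · simp [fwd, bwd, algebraMap_eq]
    linear_combination (X 2 : MvPolynomial (Fin 4) k) * hE'
  · simp [fwd, bwd, algebraMap_eq]
    linear_combination (X 3 : MvPolynomial (Fin 4) k) * hE'

lemma bwd_fwd (p q : k × k) (t s : k) (hD : p.1 + t * p.2 ≠ 0) (hE : q.1 + s * q.2 ≠ 0) :
    (bwd p q t s).comp (fwd p q t s) = AlgHom.id k (MvPolynomial (Fin 4) k) := by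
  have hD' : (C ((p.1 + t * p.2)⁻¹) * (C p.1 + C t * C p.2) : MvPolynomial (Fin 4) k) = 1 := by
    rw [← C_mul, ← C_add, ← C_mul, inv_mul_cancel₀ hD, C_1]
  have hE' : (C ((q.1 + s * q.2)⁻¹) * (C q.1 + C s * C q.2) : MvPolynomial (Fin 4) k) = 1 := by
    rw [← C_mul, ← C_add, ← C_mul, inv_mul_cancel₀ hE, C_1]
  apply MvPolynomial.algHom_ext
  intro i
  fin_cases i
  · simp [fwd, bwd, algebraMap_eq]
    linear_combination (X 0 : MvPolynomial (Fin 4) k) * hD'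
  · simp [fwd, bwd, algebraMap_eq]
    linear_combination (X 1 : MvPolynomial (Fin 4) k) * hD'
  · simp [fwd, bwd, algebraMap_eq]
    linear_combination (X 2 : MvPolynomial (Fin 4) k) * hE'
  · simp [fwd, bwd, algebraMap_eq]
    linear_combination (X 3 : MvPolynomial (Fin 4) k) * hE'

/-- The coordinate change as an algebra automorphism. -/
def autoE (p q : k × k) (t s : k) (hD : p.1 + t * p.2 ≠ 0) (hE : q.1 + s * q.2 ≠ 0) :
    MvPolynomial (Fin 4) k ≃ₐ[k] MvPolynomial (Fin 4) k :=
  AlgEquiv.ofAlgHom (fwd p q t s) (bwd p q t s) (fwd_bwd p q t s hD hE) (bwd_fwd p q t s hD hE)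

lemma pointIdeal_eq_map (p q : k × k) (t s : k) (hD : p.1 + t * p.2 ≠ 0)
    (hE : q.1 + s * q.2 ≠ 0) :
    pointIdeal k p q =
      Ideal.map ((autoE p q t s hD hE).toRingEquiv) (Ideal.span {X 0, X 2}) := by
  rw [pointIdeal, Ideal.map_span]
  congr 1
  simp [autoE, fwd, Set.image_insert_eq, AlgEquiv.ofAlgHom]

/-- `fwd (X c)` is a non-zerodivisor modulo any power of the point ideal, for `c ∉ {0, 2}`. -/
lemma nzd_point_pow (p q : k × k) (t s : k)
    (hD : p.1 + t * p.2 ≠ 0) (hE : q.1 + s * q.2 ≠ 0)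
    (c : Fin 4) (hc0 : c ≠ 0) (hc2 : c ≠ 2) (m : ℕ) (f : MvPolynomial (Fin 4) k)
    (h : (fwd p q t s) (X c) * f ∈ (pointIdeal k p q) ^ m) :
    f ∈ (pointIdeal k p q) ^ m := by
  rw [pointIdeal_eq_map p q t s hD hE, ← Ideal.map_pow] at h ⊢
  set e := (autoE p q t s hD hE).toRingEquiv with he
  rw [← Ideal.symm_apply_mem_of_equiv_iff] at h ⊢
  rw [map_mul] at h
  have hL : e.symm ((fwd p q t s) (X c)) = X c := by
    have : (fwd p q t s) (X c) = e (X c) := by simp [he, autoE, AlgEquiv.ofAlgHom]; rfl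
    rw [this, RingEquiv.symm_apply_apply]
  rw [hL] at h
  exact X_mul_mem_pow hc0 hc2 m _ h

/-! ### The bihomogeneous components -/

lemma biComp_mul {a b c d : ℕ} {f g : MvPolynomial (Fin 4) k}
    (hf : f ∈ biComp k a b) (hg : g ∈ biComp k c d) :
    f * g ∈ biComp k (a + c) (b + d) := by
  induction hf using Submodule.span_induction with
  | mem f hfm =>
    induction hg using Submodule.span_induction with
    | mem g hgm =>
      obtain ⟨u, hu1, hu2, rfl⟩ := hfm
      obtain ⟨v, hv1, hv2, rfl⟩ := hgm
      apply Submodule.subset_span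
      refine ⟨u + v, ?_, ?_, ?_⟩
      · simp only [Finsupp.add_apply]; omega
      · simp only [Finsupp.add_apply]; omega
      · rw [monomial_mul, one_mul]
    | zero => rw [mul_zero]; exact zero_mem _
    | add x y _ _ hx hy => rw [mul_add]; exact add_mem hx hy
    | smul r x _ hx => rw [mul_smul_comm]; exact Submodule.smul_mem _ _ hx
  | zero => rw [zero_mul]; exact zero_mem _
  | add x y _ _ hx hy => rw [add_mul]; exact add_mem hx hy
  | smul r x _ hx => rw [smul_mul_assoc]; exact Submodule.smul_mem _ _ hx

lemma X_mem_biComp_row (c : Fin 4) (h0 : c = 0 ∨ c = 1) :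
    (X c : MvPolynomial (Fin 4) k) ∈ biComp k 1 0 := by
  apply Submodule.subset_span
  refine ⟨Finsupp.single c 1, ?_, ?_, by rw [← X_pow_eq_monomial, pow_one]⟩
  · rcases h0 with rfl | rfl <;> simp
  · rcases h0 with rfl | rfl <;> simp [Finsupp.single_apply]

lemma X_mem_biComp_col (c : Fin 4) (h0 : c = 2 ∨ c = 3) :
    (X c : MvPolynomial (Fin 4) k) ∈ biComp k 0 1 := by
  apply Submodule.subset_span
  refine ⟨Finsupp.single c 1, ?_, ?_, by rw [← X_pow_eq_monomial, pow_one]⟩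
  · rcases h0 with rfl | rfl <;> simp [Finsupp.single_apply]
  · rcases h0 with rfl | rfl <;> simp [Finsupp.single_apply]

lemma biComp_fd (i j : ℕ) : FiniteDimensional k (biComp k i j) := by
  apply FiniteDimensional.span_of_finite
  have hsub : {p : MvPolynomial (Fin 4) k | ∃ d : Fin 4 →₀ ℕ,
      d 0 + d 1 = i ∧ d 2 + d 3 = j ∧ p = MvPolynomial.monomial d 1}
      ⊆ (fun d : Fin 4 →₀ ℕ => (monomial d 1 : MvPolynomial (Fin 4) k)) ''
        (Set.Iic (Finsupp.equivFunOnFinite.symm ![i, i, j, j])) := by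
    rintro p ⟨d, h1, h2, rfl⟩
    refine ⟨d, ?_, rfl⟩
    intro x
    fin_cases x <;> simp [Finsupp.coe_equivFunOnFinite_symm] <;> omega
  exact Set.Finite.subset (Set.Finite.image _ (Set.finite_Iic _)) hsub

lemma monomial_factor (c : Fin 4) (d : Fin 4 →₀ ℕ) (h : 0 < d c) :
    (X c : MvPolynomial (Fin 4) k) * monomial (d - Finsupp.single c 1) 1 = monomial d 1 := by
  rw [← pow_one (X c : MvPolynomial (Fin 4) k), ← monomial_single_add]
  have hd' : Finsupp.single c 1 + (d - Finsupp.single c 1) = d := by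
    ext x
    by_cases hx : x = c
    · subst hx
      simp [Finsupp.add_apply, Finsupp.tsub_apply, Finsupp.single_apply]
      omega
    · simp [Finsupp.single_apply, Ne.symm hx]
  rw [hd']

lemma biComp_step_row (n j : ℕ) :
    biComp k (n + 1) j ≤
      (biComp k n j).map (LinearMap.mulLeft k (X 0 : MvPolynomial (Fin 4) k)) ⊔
      (biComp k n j).map (LinearMap.mulLeft k (X 1 : MvPolynomial (Fin 4) k)) := by
  rw [biComp, Submodule.span_le]
  rintro p ⟨d, h1, h2, rfl⟩
  by_cases h0 : 0 < d 0
  · apply Submodule.mem_sup_left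
    refine ⟨monomial (d - Finsupp.single 0 1) 1, Submodule.subset_span
      ⟨d - Finsupp.single 0 1, ?_, ?_, rfl⟩, monomial_factor 0 d h0⟩ <;>
      simp only [Finsupp.tsub_apply, Finsupp.single_apply] <;> simp <;> omega
  · have h1' : 0 < d 1 := by omega
    apply Submodule.mem_sup_right
    refine ⟨monomial (d - Finsupp.single 1 1) 1, Submodule.subset_span
      ⟨d - Finsupp.single 1 1, ?_, ?_, rfl⟩, monomial_factor 1 d h1'⟩ <;>
      simp only [Finsupp.tsub_apply, Finsupp.single_apply] <;> simp <;> omega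

lemma biComp_step_col (i n : ℕ) :
    biComp k i (n + 1) ≤
      (biComp k i n).map (LinearMap.mulLeft k (X 2 : MvPolynomial (Fin 4) k)) ⊔
      (biComp k i n).map (LinearMap.mulLeft k (X 3 : MvPolynomial (Fin 4) k)) := by
  rw [biComp, Submodule.span_le]
  rintro p ⟨d, h1, h2, rfl⟩
  by_cases h0 : 0 < d 2
  · apply Submodule.mem_sup_left
    refine ⟨monomial (d - Finsupp.single 2 1) 1, Submodule.subset_span
      ⟨d - Finsupp.single 2 1, ?_, ?_, rfl⟩, monomial_factor 2 d h0⟩ <;>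
      simp only [Finsupp.tsub_apply, Finsupp.single_apply] <;> simp <;> omega
  · have h1' : 0 < d 3 := by omega
    apply Submodule.mem_sup_right
    refine ⟨monomial (d - Finsupp.single 3 1) 1, Submodule.subset_span
      ⟨d - Finsupp.single 3 1, ?_, ?_, rfl⟩, monomial_factor 3 d h1'⟩ <;>
      simp only [Finsupp.tsub_apply, Finsupp.single_apply] <;> simp <;> omega

/-! ### The abstract dimension-stabilization argument -/

lemma abstract_step {K V : Type*} [Field K] [AddCommGroup V] [Module K V]
    (A B C : Submodule K V) [FiniteDimensional K B]
    (μ μ0 μ1 : V →ₗ[K] V) (hinj : Function.Injective μ)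
    (hc0 : μ ∘ₗ μ0 = μ0 ∘ₗ μ) (hc1 : μ ∘ₗ μ1 = μ1 ∘ₗ μ)
    (hAB : A.map μ ≤ B) (hBC : B.map μ ≤ C)
    (hC : C ≤ B.map μ0 ⊔ B.map μ1) (hB : A.map μ0 ⊔ A.map μ1 ≤ B)
    (h : Module.finrank K A = Module.finrank K B) :
    Module.finrank K B = Module.finrank K C := by
  have hr1 : Module.finrank K (A.map μ) = Module.finrank K A :=
    (LinearEquiv.finrank_eq (Submodule.equivMapOfInjective μ hinj A)).symm
  have hmapAB : A.map μ = B :=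
    Submodule.eq_of_le_of_finrank_le hAB (by rw [hr1, ← h])
  have hCeq : C = B.map μ := by
    refine le_antisymm ?_ hBC
    calc C ≤ B.map μ0 ⊔ B.map μ1 := hC
    _ = ((A.map μ).map μ0) ⊔ ((A.map μ).map μ1) := by rw [hmapAB]
    _ = ((A.map μ0).map μ) ⊔ ((A.map μ1).map μ) := by
        rw [← Submodule.map_comp, ← Submodule.map_comp, ← hc0, ← hc1,
          Submodule.map_comp, Submodule.map_comp]
    _ = (A.map μ0 ⊔ A.map μ1).map μ := (Submodule.map_sup _ _ _).symm
    _ ≤ B.map μ := Submodule.map_mono hB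
  rw [hCeq]
  exact LinearEquiv.finrank_eq (Submodule.equivMapOfInjective μ hinj B)

/-! ### Glue between components and the quotient -/

lemma comm_quot (I : Ideal (MvPolynomial (Fin 4) k)) (f : MvPolynomial (Fin 4) k) :
    (Ideal.Quotient.mkₐ k I).toLinearMap ∘ₗ LinearMap.mulLeft k f
      = LinearMap.mulLeft k (Ideal.Quotient.mkₐ k I f) ∘ₗ (Ideal.Quotient.mkₐ k I).toLinearMap := by
  ext x
  simp [LinearMap.mulLeft_apply]

lemma map_mul_W_le (I : Ideal (MvPolynomial (Fin 4) k)) {a b i j i' j' : ℕ}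
    {L : MvPolynomial (Fin 4) k} (hL : L ∈ biComp k a b)
    (hi : a + i = i') (hj : b + j = j') :
    (((biComp k i j).map (Ideal.Quotient.mkₐ k I).toLinearMap).map
        (LinearMap.mulLeft k (Ideal.Quotient.mkₐ k I L)))
      ≤ (biComp k i' j').map (Ideal.Quotient.mkₐ k I).toLinearMap := by
  subst hi hj
  rw [← Submodule.map_comp, ← comm_quot, Submodule.map_comp]
  apply Submodule.map_mono
  rintro x ⟨g, hg, rfl⟩
  exact biComp_mul hL hg

lemma quot_mul_inj (I : Ideal (MvPolynomial (Fin 4) k)) (L : MvPolynomial (Fin 4) k)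
    (hnzd : ∀ f, L * f ∈ I → f ∈ I) :
    Function.Injective (LinearMap.mulLeft k (Ideal.Quotient.mkₐ k I L)) := by
  intro x y hxy
  obtain ⟨f, rfl⟩ := Ideal.Quotient.mk_surjective (I := I) x
  obtain ⟨g, rfl⟩ := Ideal.Quotient.mk_surjective (I := I) y
  simp only [LinearMap.mulLeft_apply, Ideal.Quotient.mkₐ_eq_mk] at hxy
  have h0 : (Ideal.Quotient.mk I) (L * (f - g)) = 0 := by
    rw [mul_sub, map_sub, map_mul, map_mul, hxy, sub_self]
  rw [Ideal.Quotient.eq_zero_iff_mem] at h0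
  have h1 := hnzd _ h0
  have h2 : (Ideal.Quotient.mk I) (f - g) = 0 := (Ideal.Quotient.eq_zero_iff_mem).mpr h1
  rw [map_sub, sub_eq_zero] at h2
  exact h2

end Aux

set_option maxHeartbeats 2000000 in
/-- once the Hilbert function of a fat point scheme stabilizes along a
row or column, it stays constant. -/
theorem hilb_stabilizes (k : Type*) [Field k] [IsAlgClosed k]
    (s : ℕ) (P : Fin s → (k × k) × (k × k))
    (hP1 : ∀ a, (P a).1 ≠ 0) (hP2 : ∀ a, (P a).2 ≠ 0)
    (hdist : ∀ a b, a ≠ b →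
      pointIdeal k (P a).1 (P a).2 ≠ pointIdeal k (P b).1 (P b).2)
    (m : Fin s → ℕ) (hm : ∀ a, 0 < m a)
    (I : Ideal (MvPolynomial (Fin 4) k))
    (hI : I = ⨅ a, (pointIdeal k (P a).1 (P a).2) ^ (m a))
    (i j : ℕ) :
    (hilb k I i j = hilb k I (i + 1) j → hilb k I (i + 1) j = hilb k I (i + 2) j) ∧
    (hilb k I i j = hilb k I i (j + 1) → hilb k I i (j + 1) = hilb k I i (j + 2)) := by
  classical
  -- choose the parameters `t`, `s'` of the coordinate change
  obtain ⟨t, ht⟩ := Infinite.exists_notMem_finset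
    (Finset.image (fun a => -(P a).1.1 / (P a).1.2) Finset.univ)
  obtain ⟨s', hs'⟩ := Infinite.exists_notMem_finset
    (Finset.image (fun a => -(P a).2.1 / (P a).2.2) Finset.univ)
  have hta : ∀ a, (P a).1.1 + t * (P a).1.2 ≠ 0 := by
    intro a h
    by_cases h2 : (P a).1.2 = 0
    · exact hP1 a (Prod.ext (by simpa [h2] using h) h2)
    · apply ht
      rw [Finset.mem_image]
      refine ⟨a, Finset.mem_univ a, ?_⟩
      rw [div_eq_iff h2]
      linear_combination -h
  have hsa : ∀ a, (P a).2.1 + s' * (P a).2.2 ≠ 0 := by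
    intro a h
    by_cases h2 : (P a).2.2 = 0
    · exact hP2 a (Prod.ext (by simpa [h2] using h) h2)
    · apply hs'
      rw [Finset.mem_image]
      refine ⟨a, Finset.mem_univ a, ?_⟩
      rw [div_eq_iff h2]
      linear_combination -h
  -- the two non-zerodivisors
  set Lr : MvPolynomial (Fin 4) k := X 0 + C t * X 1 with hLr
  set Lc : MvPolynomial (Fin 4) k := X 2 + C s' * X 3 with hLc
  have hLr_mem : Lr ∈ biComp k 1 0 := by
    rw [hLr]
    refine add_mem (X_mem_biComp_row 0 (Or.inl rfl)) ?_
    rw [MvPolynomial.C_mul']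
    exact Submodule.smul_mem _ _ (X_mem_biComp_row 1 (Or.inr rfl))
  have hLc_mem : Lc ∈ biComp k 0 1 := by
    rw [hLc]
    refine add_mem (X_mem_biComp_col 2 (Or.inl rfl)) ?_
    rw [MvPolynomial.C_mul']
    exact Submodule.smul_mem _ _ (X_mem_biComp_col 3 (Or.inr rfl))
  have hLr_nzd : ∀ f, Lr * f ∈ I → f ∈ I := by
    intro f hf
    rw [hI, Ideal.mem_iInf] at hf ⊢
    intro a
    apply nzd_point_pow (P a).1 (P a).2 t s' (hta a) (hsa a) 1 (by decide) (by decide) (m a) f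
    have : (fwd (P a).1 (P a).2 t s') (X 1) = Lr := by simp [fwd, hLr]
    rw [this]
    exact hf a
  have hLc_nzd : ∀ f, Lc * f ∈ I → f ∈ I := by
    intro f hf
    rw [hI, Ideal.mem_iInf] at hf ⊢
    intro a
    apply nzd_point_pow (P a).1 (P a).2 t s' (hta a) (hsa a) 3 (by decide) (by decide) (m a) f
    have : (fwd (P a).1 (P a).2 t s') (X 3) = Lc := by simp [fwd, hLc]
    rw [this]
    exact hf a
  -- notation for the images in the quotient
  haveI : ∀ i j : ℕ, FiniteDimensional k (biComp k i j) := fun i j => biComp_fd i j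
  haveI hWfd : ∀ i j : ℕ, FiniteDimensional k
      ((biComp k i j).map (Ideal.Quotient.mkₐ k I).toLinearMap) := by
    intro i j
    exact Module.Finite.map _ _
  have comm_mul : ∀ x y : MvPolynomial (Fin 4) k ⧸ I,
      LinearMap.mulLeft k x ∘ₗ LinearMap.mulLeft k y
        = LinearMap.mulLeft k y ∘ₗ LinearMap.mulLeft k x := by
    intro x y
    ext z
    simp only [LinearMap.coe_comp, Function.comp_apply, LinearMap.mulLeft_apply]
    ring
  set πm := (Ideal.Quotient.mkₐ k I).toLinearMap with hπm
  set W : ℕ → ℕ → Submodule k (MvPolynomial (Fin 4) k ⧸ I) :=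
    (fun i' j' => (biComp k i' j').map πm) with hW
  constructor
  · -- row direction
    intro h
    simp only [hilb] at h ⊢
    refine abstract_step (W i j) (W (i+1) j) (W (i+2) j)
      (LinearMap.mulLeft k (Ideal.Quotient.mkₐ k I Lr))
      (LinearMap.mulLeft k (Ideal.Quotient.mkₐ k I (X 0)))
      (LinearMap.mulLeft k (Ideal.Quotient.mkₐ k I (X 1)))
      (quot_mul_inj I Lr hLr_nzd) (comm_mul _ _) (comm_mul _ _)
      (map_mul_W_le (i := i) (j := j) I hLr_mem (by omega) (by omega))
      (map_mul_W_le (i := i+1) (j := j) I hLr_mem (by omega) (by omega))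
      ?_
      (sup_le (map_mul_W_le (i := i) (j := j) I (X_mem_biComp_row 0 (Or.inl rfl)) (by omega) (by omega))
        (map_mul_W_le (i := i) (j := j) I (X_mem_biComp_row 1 (Or.inr rfl)) (by omega) (by omega)))
      h
    -- hC : W (i+2) j ≤ map μ0 (W (i+1) j) ⊔ map μ1 (W (i+1) j)
    show W (i+2) j ≤ _
    calc (biComp k (i + 2) j).map πm
        ≤ ((biComp k (i + 1) j).map (LinearMap.mulLeft k (X 0)) ⊔
            (biComp k (i + 1) j).map (LinearMap.mulLeft k (X 1))).map πm :=
          Submodule.map_mono (biComp_step_row (i + 1) j)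
    _ = _ := by
        rw [Submodule.map_sup, ← Submodule.map_comp, ← Submodule.map_comp,
          comm_quot I (X 0), comm_quot I (X 1), Submodule.map_comp, Submodule.map_comp]
  · -- column direction
    intro h
    simp only [hilb] at h ⊢
    refine abstract_step (W i j) (W i (j+1)) (W i (j+2))
      (LinearMap.mulLeft k (Ideal.Quotient.mkₐ k I Lc))
      (LinearMap.mulLeft k (Ideal.Quotient.mkₐ k I (X 2)))
      (LinearMap.mulLeft k (Ideal.Quotient.mkₐ k I (X 3)))
      (quot_mul_inj I Lc hLc_nzd) (comm_mul _ _) (comm_mul _ _)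
      (map_mul_W_le (i := i) (j := j) I hLc_mem (by omega) (by omega))
      (map_mul_W_le (i := i) (j := j+1) I hLc_mem (by omega) (by omega))
      ?_
      (sup_le (map_mul_W_le (i := i) (j := j) I (X_mem_biComp_col 2 (Or.inl rfl)) (by omega) (by omega))
        (map_mul_W_le (i := i) (j := j) I (X_mem_biComp_col 3 (Or.inr rfl)) (by omega) (by omega)))
      h
    show W i (j+2) ≤ _
    calc (biComp k i (j + 2)).map πm
        ≤ ((biComp k i (j + 1)).map (LinearMap.mulLeft k (X 2)) ⊔
            (biComp k i (j + 1)).map (LinearMap.mulLeft k (X 3))).map πm :=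
          Submodule.map_mono (biComp_step_col i (j + 1))
    _ = _ := by
        rw [Submodule.map_sup, ← Submodule.map_comp, ← Submodule.map_comp,
          comm_quot I (X 2), comm_quot I (X 3), Submodule.map_comp, Submodule.map_comp]
end
end

section
/- For any fat point scheme Z in P¹×P¹, the conjugate partition α_Z* majorizes β_Z: for every i, the sum of the first i parts of α_Z* is at least the sum of the first i parts of β_Z (padding the shorter tuple with zeros). -/
noncomputable section

/-- The multiset of entries `a_{i,k} = Σ_j max(0, m_{ij} - k)`, `0 ≤ k < max_j m_{ij}`,
over all rows `i`; the tuple `α_Z` is its nonincreasing rearrangement. -/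
def alphaMul {r t : ℕ} (m : Fin r → Fin t → ℕ) : Multiset ℕ :=
  ∑ i : Fin r, (Multiset.range (Finset.univ.sup (m i))).map (fun h => ∑ j, (m i j - h))

/-- The multiset of entries `b_{j,k} = Σ_i max(0, m_{ij} - k)`, `0 ≤ k < max_i m_{ij}`,
over all columns `j`; the tuple `β_Z` is its nonincreasing rearrangement. -/
def betaMul {r t : ℕ} (m : Fin r → Fin t → ℕ) : Multiset ℕ :=
  ∑ j : Fin t, (Multiset.range (Finset.univ.sup (fun i => m i j))).map
    (fun h => ∑ i, (m i j - h))

/-- Conjugate partition of a nonincreasing list: the `i`-th entry (for `1 ≤ i ≤ λ₁`)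
is the number of parts `≥ i`. -/
def conjList (l : List ℕ) : List ℕ :=
  (List.range' 1 (l.foldr max 0)).map fun i => l.countP (fun x => decide (i ≤ x))

/-! ### Auxiliary lemmas -/

lemma take_range'_aux : ∀ (b a n : ℕ), (List.range' a b).take n = List.range' a (min n b)
  | 0, a, n => by simp
  | b+1, a, 0 => by simp
  | b+1, a, n+1 => by
    rw [List.range'_succ, List.take_succ_cons, take_range'_aux b (a+1) n,
      show min (n+1) (b+1) = (min n b) + 1 by omega, List.range'_succ]

lemma sum_map_range'_aux (f : ℕ → ℕ) :
    ∀ c, ((List.range' 1 c).map f).sum = ∑ i ∈ Finset.range c, f (1 + i)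
  | 0 => by simp
  | c+1 => by
    rw [List.range'_concat, List.map_append, List.sum_append, sum_map_range'_aux f c,
      Finset.sum_range_succ]
    simp

lemma mem_le_foldr_max (l : List ℕ) {x : ℕ} (hx : x ∈ l) : x ≤ l.foldr max 0 := by
  induction l with
  | nil => simp at hx
  | cons a l ih =>
    rcases List.mem_cons.1 hx with h | h
    · subst h; exact le_max_left _ _
    · exact le_trans (ih h) (le_max_right _ _)

lemma sum_ite_min (a n : ℕ) :
    (∑ i ∈ Finset.range n, if 1 + i ≤ a then 1 else 0) = min a n := by
  induction n with
  | zero => simp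
  | succ n ih =>
    rw [Finset.sum_range_succ, ih]
    split <;> omega

lemma sum_countP_eq (n : ℕ) :
    ∀ l : List ℕ, (∑ i ∈ Finset.range n, l.countP (fun x => decide (1 + i ≤ x)))
      = (l.map (fun x => min x n)).sum
  | [] => by simp
  | a :: l => by
    simp only [List.countP_cons, List.map_cons, List.sum_cons]
    rw [Finset.sum_add_distrib, sum_countP_eq n l]
    simp only [decide_eq_true_eq]
    rw [sum_ite_min a n]
    omega

/-- Key identity: the sum of the first `n` entries of the conjugate partition
equals `Σ_x min(x, n)`. -/
lemma conj_take_sum (l : List ℕ) (n : ℕ) :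
    ((conjList l).take n).sum = (l.map (fun x => min x n)).sum := by
  set K := l.foldr max 0 with hK
  have h1 : (conjList l).take n
      = (List.range' 1 (min n K)).map (fun i => l.countP (fun x => decide (i ≤ x))) := by
    rw [conjList, ← List.map_take, take_range'_aux]
  rw [h1, sum_map_range'_aux, ← sum_countP_eq n l]
  apply Finset.sum_subset
  · exact Finset.range_subset_range.2 (min_le_left _ _)
  · intro i hmem hi
    have hm1 : i < n := Finset.mem_range.1 hmem
    have hm2 : ¬ i < min n K := fun h => hi (Finset.mem_range.2 h)
    rw [List.countP_eq_zero]
    intro x hx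
    simp only [decide_eq_true_eq]
    have := mem_le_foldr_max l hx
    omega

lemma conj_sort_take (s : Multiset ℕ) (n : ℕ) :
    ((conjList (s.sort (· ≥ ·))).take n).sum = (s.map (fun x => min x n)).sum := by
  rw [conj_take_sum]
  calc ((s.sort (· ≥ ·)).map (fun x => min x n)).sum
      = ((Multiset.map (fun x => min x n) ↑(s.sort (· ≥ ·)))).sum := by
        rw [Multiset.map_coe, Multiset.sum_coe]
    _ = (s.map (fun x => min x n)).sum := by rw [Multiset.sort_eq]

lemma exists_le_of_le_map {α β : Type*} {f : α → β} (u : Multiset β) :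
    ∀ (s : Multiset α), u ≤ s.map f → ∃ v, v ≤ s ∧ v.map f = u := by
  classical
  induction u using Multiset.induction with
  | empty => exact fun s _ => ⟨0, Multiset.zero_le _, rfl⟩
  | cons a u ih =>
    intro s h
    have ha : a ∈ s.map f := Multiset.mem_of_le h (Multiset.mem_cons_self a u)
    obtain ⟨x, hx, hfx⟩ := Multiset.mem_map.1 ha
    have hs : s.map f = a ::ₘ (s.erase x).map f := by
      conv_lhs => rw [← Multiset.cons_erase hx]
      rw [Multiset.map_cons, hfx]
    have h2 : u ≤ (s.erase x).map f := by
      have h3 := Multiset.erase_le_erase a h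
      rwa [Multiset.erase_cons_head, hs, Multiset.erase_cons_head] at h3
    obtain ⟨v, hv, hvm⟩ := ih (s.erase x) h2
    refine ⟨x ::ₘ v, ?_, by rw [Multiset.map_cons, hvm, hfx]⟩
    calc x ::ₘ v ≤ x ::ₘ s.erase x := Multiset.cons_le_cons x hv
      _ = s := Multiset.cons_erase hx

lemma map_finsum' {α β γ : Type*} (s : Finset β) (g : β → Multiset α) (f : α → γ) :
    (∑ x ∈ s, g x).map f = ∑ x ∈ s, (g x).map f :=
  map_sum (Multiset.mapAddMonoidHom f) _ _

lemma countP_finsum {α β : Type*} (s : Finset β) (g : β → Multiset α)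
    (p : α → Prop) [DecidablePred p] :
    (∑ x ∈ s, g x).countP p = ∑ x ∈ s, (g x).countP p :=
  map_sum (Multiset.countPAddMonoidHom p) _ _

lemma sum_finsum {β : Type*} (s : Finset β) (g : β → Multiset ℕ) :
    (∑ x ∈ s, g x).sum = ∑ x ∈ s, (g x).sum := by
  induction s using Finset.cons_induction with
  | empty => simp
  | cons a s ha ih => rw [Finset.sum_cons, Finset.sum_cons, Multiset.sum_add, ih]

lemma msum_range (M : ℕ) (f : ℕ → ℕ) :
    ((Multiset.range M).map f).sum = ∑ l ∈ Finset.range M, f l := by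
  rw [Finset.sum_eq_multiset_sum, Finset.range_val]

lemma sum_map_finset_sum {α β : Type*} (v : Multiset α) (s : Finset β) (F : β → α → ℕ) :
    (v.map (fun a => ∑ x ∈ s, F x a)).sum = ∑ x ∈ s, (v.map (F x)).sum := by
  induction v using Multiset.induction with
  | empty => simp
  | cons a u ih =>
    simp only [Multiset.map_cons, Multiset.sum_cons, ih, Finset.sum_add_distrib]

lemma sum_map_ite {α : Type*} (v : Multiset α) (p : α → Prop) [DecidablePred p] :
    (v.map (fun x => if p x then 1 else 0)).sum = v.countP p := by
  induction v using Multiset.induction with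
  | empty => simp
  | cons a u ih =>
    rw [Multiset.map_cons, Multiset.sum_cons, Multiset.countP_cons, ih]
    split <;> omega

lemma countP_range_lt (N c : ℕ) :
    (Multiset.range N).countP (fun k => k < c) = min c N := by
  induction N with
  | zero => simp
  | succ N ih =>
    rw [Multiset.range_succ, Multiset.countP_cons, ih]
    split <;> omega

lemma sum_ite_range (M c : ℕ) (h : c ≤ M) :
    (∑ l ∈ Finset.range M, if l < c then 1 else 0) = c := by
  induction M with
  | zero => simp only [Finset.range_zero, Finset.sum_empty]; omega
  | succ M ih =>
    rw [Finset.sum_range_succ]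
    rcases Nat.lt_or_ge M c with hc | hc
    · have hcM : c = M + 1 := by omega
      subst hcM
      rw [if_pos hc]
      have : (∑ l ∈ Finset.range M, if l < M + 1 then 1 else 0)
          = ∑ l ∈ Finset.range M, 1 := by
        apply Finset.sum_congr rfl
        intro l hl
        simp only [Finset.mem_range] at hl
        rw [if_pos (by omega)]
      rw [this]; simp
    · rw [if_neg (by omega), ih hc]; omega

/-- Core inequality: any submultiset of `betaMul m` of cardinality at most `n`
has sum at most `Σ_{a ∈ alphaMul m} min(a, n)`. -/
lemma core_bound {r t : ℕ} (m : Fin r → Fin t → ℕ) (n : ℕ) (u : Multiset ℕ)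
    (hu : u ≤ betaMul m) (hc : Multiset.card u ≤ n) :
    u.sum ≤ ((alphaMul m).map (fun a => min a n)).sum := by
  classical
  set N : Fin t → ℕ := fun j => Finset.univ.sup (fun i => m i j) with hN
  set M : Fin r → ℕ := fun i => Finset.univ.sup (m i) with hM
  set S : Multiset (Fin t × ℕ) := ∑ j : Fin t, (Multiset.range (N j)).map (fun k => (j, k))
    with hS
  have hB : betaMul m = S.map (fun p => ∑ i, (m i p.1 - p.2)) := by
    rw [betaMul, hS, map_finsum']
    refine Finset.sum_congr rfl fun j _ => ?_
    rw [Multiset.map_map]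
    rfl
  obtain ⟨v, hvS, hvu⟩ := exists_le_of_le_map u S (hB ▸ hu)
  have hvcard : Multiset.card v ≤ n := by
    rw [← hvu, Multiset.card_map] at hc
    exact hc
  -- rewrite the sum
  have hmle : ∀ (i : Fin r) (p : Fin t × ℕ), m i p.1 - p.2 ≤ M i :=
    fun i p => le_trans (Nat.sub_le _ _) (Finset.le_sup (Finset.mem_univ p.1))
  have hsum1 : u.sum = ∑ i : Fin r, ∑ l ∈ Finset.range (M i),
      v.countP (fun p => l < m i p.1 - p.2) := by
    rw [← hvu]
    have : (v.map (fun p => ∑ i, (m i p.1 - p.2))).sum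
        = (v.map (fun p => ∑ i : Fin r, ∑ l ∈ Finset.range (M i),
            if l < m i p.1 - p.2 then 1 else 0)).sum := by
      congr 1
      apply Multiset.map_congr rfl
      intro p _
      refine Finset.sum_congr rfl fun i _ => ?_
      rw [sum_ite_range _ _ (hmle i p)]
    rw [this, sum_map_finset_sum]
    refine Finset.sum_congr rfl fun i _ => ?_
    rw [sum_map_finset_sum]
    exact Finset.sum_congr rfl fun l _ => sum_map_ite v _
  -- bound each count
  have hbound : ∀ (i : Fin r), ∀ l ∈ Finset.range (M i),
      v.countP (fun p => l < m i p.1 - p.2) ≤ min (∑ j, (m i j - l)) n := by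
    intro i l _
    refine le_min ?_ (le_trans (Multiset.countP_le_card _ v) hvcard)
    calc v.countP (fun p => l < m i p.1 - p.2)
        ≤ S.countP (fun p => l < m i p.1 - p.2) := Multiset.countP_le_of_le _ hvS
      _ = ∑ j : Fin t, Multiset.card
            ((Multiset.range (N j)).filter (fun k => l < m i (j, k).1 - (j, k).2)) := by
          rw [hS, countP_finsum]
          exact Finset.sum_congr rfl fun j _ => Multiset.countP_map _ _ _
      _ ≤ ∑ j : Fin t, (m i j - l) := by
          refine Finset.sum_le_sum fun j _ => ?_
          rw [← Multiset.countP_eq_card_filter]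
          have : (Multiset.range (N j)).countP (fun k => l < m i (j, k).1 - (j, k).2)
              = (Multiset.range (N j)).countP (fun k => k < m i j - l) :=
            Multiset.countP_congr rfl (fun k _ =>
              propext ⟨fun h => by simp only at h ⊢; omega, fun h => by simp only at h ⊢; omega⟩)
          rw [this, countP_range_lt]
          exact min_le_left _ _
  have hfinal : (∑ i : Fin r, ∑ l ∈ Finset.range (M i),
      min (∑ j, (m i j - l)) n) = ((alphaMul m).map (fun a => min a n)).sum := by
    rw [alphaMul, map_finsum', sum_finsum]
    refine Finset.sum_congr rfl fun i _ => ?_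
    rw [Multiset.map_map, msum_range]
    rfl
  rw [hsum1, ← hfinal]
  exact Finset.sum_le_sum fun i _ => Finset.sum_le_sum (hbound i)

/-- for any fat point scheme `Z` in `ℙ¹ × ℙ¹` (given by the matrix of
multiplicities `m`), the conjugate `α_Z*` majorizes `β_Z`. -/
theorem conj_alpha_majorizes_beta (r t : ℕ) (m : Fin r → Fin t → ℕ) :
    ∀ n : ℕ,
      (((betaMul m).sort (· ≥ ·)).take n).sum ≤
        ((conjList ((alphaMul m).sort (· ≥ ·))).take n).sum := by
  intro n
  set L := (betaMul m).sort (· ≥ ·) with hL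
  have h1 : ((L.take n : List ℕ) : Multiset ℕ) ≤ betaMul m := by
    conv_rhs => rw [← Multiset.sort_eq (betaMul m) (· ≥ ·)]
    exact Multiset.coe_le.2 (L.take_sublist n).subperm
  have h2 : Multiset.card ((L.take n : List ℕ) : Multiset ℕ) ≤ n := by
    rw [Multiset.coe_card]
    exact le_trans (List.length_take_le n L) (le_refl n)
  calc (L.take n).sum = ((L.take n : List ℕ) : Multiset ℕ).sum := (Multiset.sum_coe _).symm
    _ ≤ ((alphaMul m).map (fun a => min a n)).sum := core_bound m n _ h1 h2
    _ = ((conjList ((alphaMul m).sort (· ≥ ·))).take n).sum := (conj_sort_take _ n).symm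
end
end
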